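/- For pairwise disjoint spectra generalized s-plateaued functions f_y (y ∈ (ZMod p)^s) on (ZMod p)^n, the Walsh supports S_{f_y} form a partition of (ZMod p)^n: they are pairwise disjoint, each has size p^{n−s}, and their union is (ZMod p)^n. -/

import Mathlib

/-!
Parseval's identity for the Walsh transform gives `∑ₐ |W_g(a)|² = p^{2n}` for every
`g : (ZMod p)^n → ZMod (p^k)`. If `g` is generalized `s`-plateaued, every nonzero term equals
`p^{n+s}`, so the Walsh support of `g` has exactly `p^{n-s}` points. The `p^s` supports of the
`f_y` are pairwise disjoint by assumption, and together they have `p^s · p^{n-s} = p^n` points,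
so they cover `(ZMod p)^n`.
-/

open Finset Function ComplexConjugate

noncomputable def zeta (m : ℕ) : ℂ := Complex.exp (2 * Real.pi * Complex.I / m)

def dot {p n : ℕ} (a x : Fin n → ZMod p) : ZMod p := ∑ i, a i * x i

noncomputable def walsh (p n k : ℕ) [Fact (Nat.Prime p)]
    (f : (Fin n → ZMod p) → ZMod (p ^ k)) (a : Fin n → ZMod p) : ℂ :=
  ∑ x : Fin n → ZMod p, zeta (p ^ k) ^ (f x).val * zeta p ^ ((-(dot a x)).val)

theorem AddChar.IsPrimitive.sum_norm_sq_sum_mul_apply_mul {R : Type*} [CommRing R] [Fintype R]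
    {ψ : AddChar R ℂ} (hψ : ψ.IsPrimitive) (c : R → ℂ) :
    ∑ a, ‖∑ x, c x * ψ (a * x)‖ ^ 2 = Fintype.card R * ∑ x, ‖c x‖ ^ 2 := by
  classical
  have orth : ∀ x y : R,
      ∑ a, ψ (a * x) * conj (ψ (a * y)) = if x = y then (Fintype.card R : ℂ) else 0 := by
    intro x y
    simp_rw [← AddChar.map_neg_eq_conj, ← AddChar.map_add_eq_mul, ← mul_neg, ← mul_add,
      ← sub_eq_add_neg, AddChar.sum_mulShift _ hψ, sub_eq_zero]
    push_cast
    congr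
  apply Complex.ofReal_injective
  push_cast
  simp_rw [← Complex.mul_conj', map_sum, map_mul, Finset.sum_mul_sum, Finset.mul_sum]
  rw [Finset.sum_comm]
  refine Finset.sum_congr rfl fun x _ => ?_
  rw [Finset.sum_comm]
  simp_rw [fun y a => show c x * ψ (a * x) * (conj (c y) * conj (ψ (a * y))) =
      c x * conj (c y) * (ψ (a * x) * conj (ψ (a * y))) by ring, ← Finset.mul_sum, orth]
  simp [mul_comm]

theorem ncard_support_mul_sq_eq_sum_norm_sq {α E : Type*} [Fintype α] [NormedAddCommGroup E]
    {W : α → E} {r : ℝ} (hW : ∀ a, ‖W a‖ = r ∨ W a = 0) :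
    (support W).ncard * r ^ 2 = ∑ a, ‖W a‖ ^ 2 := by
  classical
  calc ((support W).ncard : ℝ) * r ^ 2 = ∑ a ∈ univ.filter (W · ≠ 0), r ^ 2 := by
        rw [sum_const, nsmul_eq_mul, ← Set.ncard_coe_finset, coe_filter_univ]
        rfl
    _ = ∑ a, ‖W a‖ ^ 2 := by
        rw [sum_filter]
        refine sum_congr rfl fun a _ => ?_
        split_ifs with h
        · rw [(hW a).resolve_right h]
        · simp [not_not.mp h]

theorem iUnion_eq_univ_of_pairwise_disjoint_of_ncard_eq {ι α : Type*} [Fintype ι] [Finite α]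
    {S : ι → Set α} {m : ℕ} (hS : Pairwise (Disjoint on S)) (hm : ∀ i, (S i).ncard = m)
    (hcard : Fintype.card ι * m = Nat.card α) : ⋃ i, S i = Set.univ := by
  refine Set.eq_of_subset_of_ncard_le (Set.subset_univ _) ?_
  rw [Set.ncard_univ, Set.ncard_iUnion_of_finite (fun i => Set.toFinite _) hS,
    finsum_eq_sum_of_fintype]
  simp [hm, hcard]

theorem isPrimitiveRoot_zeta {m : ℕ} (hm : m ≠ 0) : IsPrimitiveRoot (zeta m) m :=
  Complex.isPrimitiveRoot_exp m hm

theorem norm_zeta_pow (m j : ℕ) : ‖zeta m ^ j‖ = 1 := by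
  simp [zeta, Complex.norm_exp]

section Walsh

variable (p n : ℕ) [Fact p.Prime]

-- The Walsh kernel `ζ_p^{-a·x}` is this character evaluated at the coordinatewise product `a * x`.
noncomputable def negSumChar : AddChar (Fin n → ZMod p) ℂ where
  toFun x := AddChar.zmodChar p ((isPrimitiveRoot_zeta (NeZero.ne p)).pow_eq_one) (-∑ i, x i)
  map_zero_eq_one' := by simp
  map_add_eq_mul' x y := by
    simp only [Pi.add_apply, Finset.sum_add_distrib, neg_add, AddChar.map_add_eq_mul]

theorem walsh_eq_sum_negSumChar (k : ℕ) (g : (Fin n → ZMod p) → ZMod (p ^ k))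
    (a : Fin n → ZMod p) :
    walsh p n k g a = ∑ x, zeta (p ^ k) ^ (g x).val * negSumChar p n (a * x) := rfl

theorem isPrimitive_negSumChar : (negSumChar p n).IsPrimitive := by
  intro a ha
  obtain ⟨i, hi⟩ := Function.ne_iff.mp ha
  rw [AddChar.ne_one_iff]
  refine ⟨Pi.single i 1, ?_⟩
  have hψ := AddChar.zmodChar_primitive_of_primitive_root p (isPrimitiveRoot_zeta (NeZero.ne p))
  simpa [negSumChar, Pi.single_apply, hψ.zmod_char_eq_one_iff p (-a i)] using hi

theorem sum_norm_sq_walsh (k : ℕ) (g : (Fin n → ZMod p) → ZMod (p ^ k)) :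
    ∑ a, ‖walsh p n k g a‖ ^ 2 = (p : ℝ) ^ (2 * n) := by
  simp_rw [walsh_eq_sum_negSumChar, (isPrimitive_negSumChar p n).sum_norm_sq_sum_mul_apply_mul,
    norm_zeta_pow]
  simp [ZMod.card]
  ring

end Walsh

def IsGeneralizedPlateaued (p n k s : ℕ) [Fact p.Prime] (g : (Fin n → ZMod p) → ZMod (p ^ k)) :
    Prop :=
  ∀ a, ‖walsh p n k g a‖ = (p : ℝ) ^ (((n : ℝ) + (s : ℝ)) / 2) ∨ walsh p n k g a = 0

theorem IsGeneralizedPlateaued.ncard_support {p n k s : ℕ} [Fact p.Prime]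
    {g : (Fin n → ZMod p) → ZMod (p ^ k)} (hg : IsGeneralizedPlateaued p n k s g) (hs : s ≤ n) :
    (support (walsh p n k g)).ncard = p ^ (n - s) := by
  have hp : (0 : ℝ) < p := by exact_mod_cast (Fact.out : p.Prime).pos
  have hsq : ((p : ℝ) ^ (((n : ℝ) + s) / 2)) ^ 2 = (p : ℝ) ^ (n + s) := by
    rw [← Real.rpow_natCast _ 2, ← Real.rpow_mul hp.le, ← Real.rpow_natCast]
    push_cast
    ring_nf
  have key := ncard_support_mul_sq_eq_sum_norm_sq hg
  rw [sum_norm_sq_walsh, hsq, show 2 * n = n - s + (n + s) by omega, pow_add _ (n - s)] at key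
  exact_mod_cast mul_right_cancel₀ (pow_ne_zero _ hp.ne') key

theorem stmt8 (p n k s : ℕ) [Fact (Nat.Prime p)] (hs : s ≤ n)
    (f : (Fin s → ZMod p) → (Fin n → ZMod p) → ZMod (p ^ k))
    (hf : ∀ y a, ‖walsh p n k (f y) a‖ = (p : ℝ) ^ (((n : ℝ) + (s : ℝ)) / 2) ∨
      walsh p n k (f y) a = 0)
    (hdisj : ∀ y y', y ≠ y' → ∀ a, walsh p n k (f y) a = 0 ∨ walsh p n k (f y') a = 0) :
    (∀ y, {a : Fin n → ZMod p | walsh p n k (f y) a ≠ 0}.ncard = p ^ (n - s)) ∧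
    (∀ y y', y ≠ y' →
      Disjoint {a : Fin n → ZMod p | walsh p n k (f y) a ≠ 0}
        {a : Fin n → ZMod p | walsh p n k (f y') a ≠ 0}) ∧
    (⋃ y : Fin s → ZMod p, {a : Fin n → ZMod p | walsh p n k (f y) a ≠ 0}) = Set.univ := by
  have hcard y : (support (walsh p n k (f y))).ncard = p ^ (n - s) :=
    IsGeneralizedPlateaued.ncard_support (hf y) hs
  have hpairwise : Pairwise (Disjoint on fun y => support (walsh p n k (f y))) :=
    fun y y' hy => Set.disjoint_left.mpr fun a ha ha' => (hdisj y y' hy a).elim ha ha'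
  refine ⟨hcard, fun y y' hy => hpairwise hy,
    iUnion_eq_univ_of_pairwise_disjoint_of_ncard_eq hpairwise hcard ?_⟩
  simp [Nat.card_eq_fintype_card, ZMod.card, ← pow_add, Nat.add_sub_cancel' hs]
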